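/- Let d, n be positive integers, let Z ∈ ℝ^{d×n}, and let W : ℝ^{d×n} → ℝ be twice continuously differentiable with W(F) ≥ 0 for all F ∈ ℝ^{d×n} and W(R·Z) = 0 for every R ∈ SO(d). Then for all matrices G, H ∈ ℝ^{d×d}, D²W(Z)(G·Z, H·Z) = D²W(Z)(Gˢ·Z, Hˢ·Z), where Aˢ := (A + Aᵀ)/2 denotes the symmetric part of a square matrix A. (In tensor notation, this expresses that the quadratic form G : ℂ : H with ℂ = Z·ℍᵗ·Zᵀ, ℍ = D²W(Z), only depends on the symmetric parts of G and H, i.e., the minor and major symmetry of the elasticity tensor ℂ.) -/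

import Mathlib

/-!
Along the curve `t ↦ exp (t • A) * Z` with `A` skew-symmetric, `W` vanishes and hence is minimal,
so `DW` vanishes along it; differentiating at `t = 0` gives `D²W(Z)(A·Z, ·) = 0`. Since every
`G` splits as `Gˢ + Gᵃ` with `Gᵃ` skew, bilinearity and symmetry of `D²W(Z)` remove the skew parts.
-/

open Matrix NormedSpace

attribute [local instance] Matrix.frobeniusNormedAddCommGroup Matrix.frobeniusNormedSpace
attribute [local instance] Matrix.frobeniusNormedRing Matrix.frobeniusNormedAlgebra

theorem fderiv_fderiv_apply_eq_zero_of_isLocalMin_along {E : Type*} [NormedAddCommGroup E]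
    [NormedSpace ℝ E] {f : E → ℝ} {γ : ℝ → E} {v : E} {t₀ : ℝ} (hγ : HasDerivAt γ v t₀)
    (hf : DifferentiableAt ℝ (fderiv ℝ f) (γ t₀)) (hmin : ∀ᶠ t in nhds t₀, IsLocalMin f (γ t)) :
    fderiv ℝ (fderiv ℝ f) (γ t₀) v = 0 := by
  have hderiv : HasDerivAt (fun t => fderiv ℝ f (γ t)) (fderiv ℝ (fderiv ℝ f) (γ t₀) v) t₀ :=
    hf.hasFDerivAt.comp_hasDerivAt t₀ hγ
  have hzero : (fun t => fderiv ℝ f (γ t)) =ᶠ[nhds t₀] fun _ => 0 :=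
    hmin.mono fun _ ht => ht.fderiv_eq_zero
  exact hderiv.unique ((hasDerivAt_const t₀ 0).congr_of_eventuallyEq hzero)

theorem ContinuousLinearMap.apply_add_apply_add_of_symm {E F : Type*} [NormedAddCommGroup E]
    [NormedSpace ℝ E] [NormedAddCommGroup F] [NormedSpace ℝ F] {B : E →L[ℝ] E →L[ℝ] F}
    (hB : ∀ v w, B v w = B w v) {x y u w : E} (hu : B u = 0) (hw : B w = 0) :
    B (x + u) (y + w) = B x y := by
  simp [hu, hw, hB x w]

theorem Matrix.exp_mem_specialOrthogonalGroup {m : Type*} [Fintype m] [DecidableEq m]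
    {A : Matrix m m ℝ} (hA : Aᵀ = -A) : exp A ∈ specialOrthogonalGroup m ℝ := by
  have horth : (exp A)ᵀ * exp A = 1 := by
    rw [← exp_transpose, hA, ← exp_add_of_commute _ _ (Commute.refl A).neg_left, neg_add_cancel,
      exp_zero]
  have hdet_sq : (exp A).det ^ 2 = 1 := by
    simpa [det_mul, det_transpose, sq] using congrArg det horth
  -- `exp A` is a square, so its determinant is nonnegative.
  have hdet_nonneg : 0 ≤ (exp A).det := by
    have hhalf : A = (1 / 2 : ℝ) • A + (1 / 2 : ℝ) • A := by module
    rw [hhalf, exp_add_of_commute _ _ (Commute.refl _), det_mul]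
    exact mul_self_nonneg _
  refine mem_specialOrthogonalGroup_iff.mpr ⟨(mem_orthogonalGroup_iff' _ _).mpr horth, ?_⟩
  exact (pow_eq_one_iff_of_nonneg hdet_nonneg two_ne_zero).mp hdet_sq

theorem hasDerivAt_exp_smul_mul {m n : Type*} [Fintype m] [DecidableEq m] [Fintype n]
    (A : Matrix m m ℝ) (Z : Matrix m n ℝ) :
    HasDerivAt (fun t : ℝ => exp (t • A) * Z) (A * Z) 0 := by
  have hexp : HasDerivAt (fun t : ℝ => exp (t • A)) A 0 := by
    have h := hasDerivAt_exp_smul_const' (𝕂 := ℝ) A 0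
    rwa [zero_smul, exp_zero, Matrix.mul_one] at h
  exact (mulRightLinearMap m ℝ Z).toContinuousLinearMap.hasFDerivAt.comp_hasDerivAt 0 hexp

theorem fderiv_fderiv_apply_skew_mul_eq_zero {m n : Type*} [Fintype m] [DecidableEq m]
    [Fintype n] {Z : Matrix m n ℝ} {W : Matrix m n ℝ → ℝ}
    (hW : DifferentiableAt ℝ (fderiv ℝ W) Z) (hWnonneg : ∀ F, 0 ≤ W F)
    (hWrot : ∀ R ∈ specialOrthogonalGroup m ℝ, W (R * Z) = 0)
    {A : Matrix m m ℝ} (hA : Aᵀ = -A) :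
    fderiv ℝ (fderiv ℝ W) Z (A * Z) = 0 := by
  have hγ₀ : exp ((0 : ℝ) • A) * Z = Z := by rw [zero_smul, exp_zero, Matrix.one_mul]
  have hmin : ∀ t : ℝ, IsLocalMin W (exp (t • A) * Z) := fun t =>
    Filter.Eventually.of_forall fun F =>
      (hWrot _ (exp_mem_specialOrthogonalGroup (by rw [transpose_smul, hA, smul_neg]))).trans_le
        (hWnonneg F)
  have := fderiv_fderiv_apply_eq_zero_of_isLocalMin_along (hasDerivAt_exp_smul_mul A Z)
    (by rwa [hγ₀]) (Filter.Eventually.of_forall hmin)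
  rwa [hγ₀] at this

theorem hessian_quadratic_form_symmetric_parts_general
    (d n : ℕ)
    (Z : Matrix (Fin d) (Fin n) ℝ) (W : Matrix (Fin d) (Fin n) ℝ → ℝ)
    (hW : ContDiff ℝ 2 W)
    (hWnonneg : ∀ F : Matrix (Fin d) (Fin n) ℝ, 0 ≤ W F)
    (hWrot : ∀ R : Matrix (Fin d) (Fin d) ℝ, Rᵀ * R = 1 → R.det = 1 → W (R * Z) = 0) :
    ∀ G H : Matrix (Fin d) (Fin d) ℝ,
      fderiv ℝ (fderiv ℝ W) Z (G * Z) (H * Z)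
        = fderiv ℝ (fderiv ℝ W) Z ((((1 : ℝ) / 2) • (G + Gᵀ)) * Z)
            ((((1 : ℝ) / 2) • (H + Hᵀ)) * Z) := by
  intro G H
  have hsymm : IsSymmSndFDerivAt ℝ W Z := hW.contDiffAt.isSymmSndFDerivAt (by simp)
  have hskew (A : Matrix (Fin d) (Fin d) ℝ) :
      fderiv ℝ (fderiv ℝ W) Z ((((1 : ℝ) / 2) • (A - Aᵀ)) * Z) = 0 := by
    refine fderiv_fderiv_apply_skew_mul_eq_zero
      ((hW.fderiv_right (m := 1) le_rfl).differentiable one_ne_zero Z)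
      hWnonneg (fun R hR => ?_) (by rw [transpose_smul, transpose_sub, transpose_transpose]; module)
    obtain ⟨hR, hdet⟩ := mem_specialOrthogonalGroup_iff.mp hR
    exact hWrot R ((mem_orthogonalGroup_iff' _ _).mp hR) hdet
  have hsplit (A : Matrix (Fin d) (Fin d) ℝ) :
      A * Z = (((1 : ℝ) / 2) • (A + Aᵀ)) * Z + (((1 : ℝ) / 2) • (A - Aᵀ)) * Z := by
    rw [← Matrix.add_mul]; congr 1; module
  rw [hsplit G, hsplit H]
  exact ContinuousLinearMap.apply_add_apply_add_of_symm hsymm (hskew G) (hskew H)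

/-- The quadratic form `G : ℂ : H` associated with the Hessian `ℍ = D²W(Z)` only depends on
the symmetric parts of `G` and `H`:
`D²W(Z)(G·Z, H·Z) = D²W(Z)(Gˢ·Z, Hˢ·Z)` where `Aˢ = (A + Aᵀ)/2`. -/
theorem hessian_quadratic_form_symmetric_parts
    (d n : ℕ) (hd : 0 < d) (hn : 0 < n)
    (Z : Matrix (Fin d) (Fin n) ℝ) (W : Matrix (Fin d) (Fin n) ℝ → ℝ)
    (hW : ContDiff ℝ 2 W)
    (hWnonneg : ∀ F : Matrix (Fin d) (Fin n) ℝ, 0 ≤ W F)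
    (hWrot : ∀ R : Matrix (Fin d) (Fin d) ℝ, Rᵀ * R = 1 → R.det = 1 → W (R * Z) = 0) :
    ∀ G H : Matrix (Fin d) (Fin d) ℝ,
      fderiv ℝ (fderiv ℝ W) Z (G * Z) (H * Z)
        = fderiv ℝ (fderiv ℝ W) Z ((((1 : ℝ) / 2) • (G + Gᵀ)) * Z)
            ((((1 : ℝ) / 2) • (H + Hᵀ)) * Z) :=
  hessian_quadratic_form_symmetric_parts_general d n Z W hW hWnonneg hWrot
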